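/- If B ⊆ Σⁿ is (1,1)-guaranteed, then B is (2,2)-guaranteed. -/

import Mathlib

/-- Cost structure for edit distance (removed from Mathlib; restored with its old meaning). -/
structure Levenshtein.Cost (α β δ : Type*) where
  delete : α → δ
  insert : β → δ
  substitute : α → β → δ

/-- The default cost: deletions, insertions and substitutions of distinct letters cost `1`. -/
def Levenshtein.defaultCost {α : Type*} [DecidableEq α] : Levenshtein.Cost α α ℕ where
  delete _ := 1
  insert _ := 1
  substitute a b := if a = b then 0 else 1

/-- Levenshtein distance, by the recursion characterizing Mathlib's former `levenshtein`. -/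
def levenshtein {α β δ : Type*} [Zero δ] [Add δ] [Min δ] (C : Levenshtein.Cost α β δ) :
    List α → List β → δ
  | [], [] => 0
  | [], y :: ys => C.insert y + levenshtein C [] ys
  | x :: xs, [] => C.delete x + levenshtein C xs []
  | x :: xs, y :: ys =>
      min (C.delete x + levenshtein C xs (y :: ys))
        (min (C.insert y + levenshtein C (x :: xs) ys) (C.substitute x y + levenshtein C xs ys))

/-- Edit (Levenshtein) distance between two length-`n` sequences over `α`. -/
def editDist {α : Type*} [DecidableEq α] {n : ℕ} (s t : Fin n → α) : ℕ :=
  levenshtein Levenshtein.defaultCost (List.ofFn s) (List.ofFn t)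

/-- `B` is a `(d, r)`-guaranteed subset of `Σⁿ`: for every pair of sequences within
edit distance `d`, some sequence of `B` lies in both of their `r`-neighborhoods. -/
def IsGuaranteed {α : Type*} [DecidableEq α] {n : ℕ} (d r : ℕ)
    (B : Set (Fin n → α)) : Prop :=
  ∀ s t : Fin n → α, editDist s t ≤ d →
    ∃ v ∈ B, editDist s v ≤ r ∧ editDist t v ≤ r


/-!
If `s` and `t` are at edit distance at most `2`, an optimal alignment of `s` with `t` deletes or
substitutes some position `i` of `s` (any `i` will do when `s = t`), and overwriting `s i` by any
letter keeps `s` within distance `2` of `t`. Overwrite it by a letter `c ≠ s i` and apply the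
`(1,1)` guarantee to `s` and `s' = update s i c`, obtaining `v ∈ B` within distance `1` of both.
Between words of equal length, edit distance `≤ 1` means Hamming distance `≤ 1`; as `s` and `s'`
differ exactly at `i`, this forces `v` to agree with `s` off `i`, so `v = update s i (v i)` is
within distance `2` of `t`.
-/

section Levenshtein

@[simp] theorem levenshtein_nil_nil {α β δ : Type*} [Zero δ] [Add δ] [Min δ]
    (C : Levenshtein.Cost α β δ) : levenshtein C [] [] = 0 := by
  rw [levenshtein]

@[simp] theorem levenshtein_nil_cons {α β δ : Type*} [Zero δ] [Add δ] [Min δ]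
    (C : Levenshtein.Cost α β δ) (y : β) (ys : List β) :
    levenshtein C [] (y :: ys) = C.insert y + levenshtein C [] ys := by
  rw [levenshtein]

@[simp] theorem levenshtein_cons_nil {α β δ : Type*} [Zero δ] [Add δ] [Min δ]
    (C : Levenshtein.Cost α β δ) (x : α) (xs : List α) :
    levenshtein C (x :: xs) [] = C.delete x + levenshtein C xs [] := by
  rw [levenshtein]

variable {α : Type*} [DecidableEq α]

local notation "lev" => levenshtein (Levenshtein.defaultCost (α := α))

@[simp] theorem Levenshtein.defaultCost_delete (a : α) :
    (Levenshtein.defaultCost (α := α)).delete a = 1 := rfl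

@[simp] theorem Levenshtein.defaultCost_insert (a : α) :
    (Levenshtein.defaultCost (α := α)).insert a = 1 := rfl

theorem levenshtein_cons_cons (x y : α) (xs ys : List α) :
    lev (x :: xs) (y :: ys) = min (1 + lev xs (y :: ys))
      (min (1 + lev (x :: xs) ys) ((if x = y then 0 else 1) + lev xs ys)) := by
  rw [levenshtein]
  rfl

theorem levenshtein_self (l : List α) : lev l l = 0 := by
  induction l with
  | nil => simp
  | cons x xs ih => simp [levenshtein_cons_cons, ih]

theorem eq_of_levenshtein_eq_zero : ∀ {l m : List α}, lev l m = 0 → l = m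
  | [], [], _ => rfl
  | [], y :: ys, h => by simp at h
  | x :: xs, [], h => by simp at h
  | x :: xs, y :: ys, h => by
    rw [levenshtein_cons_cons] at h
    by_cases hxy : x = y
    · subst hxy
      rw [eq_of_levenshtein_eq_zero (l := xs) (m := ys) (by simp at h; omega)]
    · simp only [if_neg hxy] at h
      omega

theorem length_eq_of_levenshtein_eq_zero {l m : List α} (h : lev l m = 0) :
    l.length = m.length :=
  congrArg List.length (eq_of_levenshtein_eq_zero h)

theorem levenshtein_comm : ∀ (l m : List α), lev l m = lev m l
  | [], [] => rfl
  | [], y :: ys => by simp [levenshtein_comm [] ys]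
  | x :: xs, [] => by simp [levenshtein_comm xs []]
  | x :: xs, y :: ys => by
    rw [levenshtein_cons_cons, levenshtein_cons_cons, levenshtein_comm xs (y :: ys),
      levenshtein_comm (x :: xs) ys, levenshtein_comm xs ys]
    simp only [eq_comm (a := x)]
    omega
  termination_by l m => l.length + m.length

theorem levenshtein_cons_left_le (a : α) (x y : List α) : lev (a :: x) y ≤ 1 + lev x y := by
  cases y with
  | nil => simp
  | cons b y => rw [levenshtein_cons_cons]; exact min_le_left _ _

theorem levenshtein_cons_right_le (b : α) (x y : List α) : lev x (b :: y) ≤ 1 + lev x y := by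
  rw [levenshtein_comm, levenshtein_comm x]
  exact levenshtein_cons_left_le b y x

theorem levenshtein_cons_cons_le (a b : α) (x y : List α) :
    lev (a :: x) (b :: y) ≤ (if a = b then 0 else 1) + lev x y := by
  rw [levenshtein_cons_cons]
  exact (min_le_right _ _).trans (min_le_right _ _)

theorem levenshtein_append_left_le (u x y : List α) : lev (u ++ x) (u ++ y) ≤ lev x y := by
  induction u with
  | nil => rfl
  | cons a u ih => exact (levenshtein_cons_cons_le a a _ _).trans (by simpa using ih)

theorem levenshtein_insert_le_one (u w : List α) (c : α) : lev (u ++ w) (u ++ c :: w) ≤ 1 := by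
  refine (levenshtein_append_left_le u _ _).trans ?_
  simpa [levenshtein_self] using levenshtein_cons_right_le c w w

theorem levenshtein_substitute_le_one (u w : List α) (a c : α) :
    lev (u ++ a :: w) (u ++ c :: w) ≤ 1 := by
  refine (levenshtein_append_left_le u _ _).trans ((levenshtein_cons_cons_le a c w w).trans ?_)
  split <;> simp [levenshtein_self]

theorem levenshtein_set_le_one (l : List α) (i : ℕ) (c : α) : lev l (l.set i c) ≤ 1 := by
  rcases lt_or_ge i l.length with hi | hi
  · have hl : l = l.take i ++ l[i] :: l.drop (i + 1) := by
      rw [List.getElem_cons_drop, List.take_append_drop]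
    rw [List.set_eq_take_cons_drop c hi]
    nth_rw 1 [hl]
    exact levenshtein_substitute_le_one _ _ _ _
  · simp [List.set_eq_of_length_le hi, levenshtein_self]

theorem eq_or_eq_set_of_levenshtein_le_one : ∀ {l m : List α}, l.length = m.length →
    lev l m ≤ 1 → l = m ∨ ∃ (p : ℕ) (b : α), m = l.set p b
  | [], m, hl, _ => .inl (List.eq_nil_of_length_eq_zero hl.symm).symm
  | x :: xs, [], hl, _ => by simp at hl
  | x :: xs, y :: ys, hl, h => by
    simp only [List.length_cons, Nat.add_right_cancel_iff] at hl
    rw [levenshtein_cons_cons] at h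
    rcases (by omega : lev xs (y :: ys) = 0 ∨ lev (x :: xs) ys = 0 ∨
        (if x = y then 0 else 1) + lev xs ys ≤ 1) with h | h | h
    · have := length_eq_of_levenshtein_eq_zero h
      simp at this; omega
    · have := length_eq_of_levenshtein_eq_zero h
      simp at this; omega
    · by_cases hxy : x = y
      · subst hxy
        rcases eq_or_eq_set_of_levenshtein_le_one hl (by simpa using h) with rfl | ⟨p, b, rfl⟩
        · exact .inl rfl
        · exact .inr ⟨p + 1, b, rfl⟩
      · rw [if_neg hxy] at h
        rw [eq_of_levenshtein_eq_zero (by omega : lev xs ys = 0)]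
        exact .inr ⟨0, y, rfl⟩

theorem exists_eq_insert_of_levenshtein_le_one : ∀ {l m : List α}, m.length = l.length + 1 →
    lev l m ≤ 1 → ∃ (u : List α) (c : α) (w : List α), l = u ++ w ∧ m = u ++ c :: w
  | _, [], hl, _ => by simp at hl
  | [], [y], _, _ => ⟨[], y, [], rfl, rfl⟩
  | [], _ :: _ :: _, hl, _ => by simp at hl
  | x :: xs, y :: ys, hl, h => by
    simp only [List.length_cons, Nat.add_right_cancel_iff] at hl
    rw [levenshtein_cons_cons] at h
    rcases (by omega : lev xs (y :: ys) = 0 ∨ lev (x :: xs) ys = 0 ∨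
        (if x = y then 0 else 1) + lev xs ys ≤ 1) with h | h | h
    · have := length_eq_of_levenshtein_eq_zero h
      simp at this; omega
    · exact ⟨[], y, x :: xs, rfl, by rw [eq_of_levenshtein_eq_zero h]; rfl⟩
    · by_cases hxy : x = y
      · subst hxy
        obtain ⟨u, c, w, rfl, rfl⟩ :=
          exists_eq_insert_of_levenshtein_le_one hl (by simpa using h)
        exact ⟨x :: u, c, w, rfl, rfl⟩
      · rw [if_neg hxy] at h
        have := length_eq_of_levenshtein_eq_zero (by omega : lev xs ys = 0)
        omega

theorem exists_forall_levenshtein_set_le_two : ∀ {l m : List α}, l.length = m.length →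
    lev l m ≤ 2 → l ≠ [] → ∃ p < l.length, ∀ c, lev (l.set p c) m ≤ 2
  | [], _, _, _, hne => absurd rfl hne
  | x :: xs, [], hl, _, _ => by simp at hl
  | x :: xs, y :: ys, hl, h, _ => by
    simp only [List.length_cons, Nat.add_right_cancel_iff] at hl
    rw [levenshtein_cons_cons] at h
    rcases (by omega : lev xs (y :: ys) ≤ 1 ∨ lev (x :: xs) ys ≤ 1 ∨
        (if x = y then 0 else 1) + lev xs ys ≤ 2) with h | h | h
    -- `x` is deleted
    · obtain ⟨u, c, w, rfl, hm⟩ := exists_eq_insert_of_levenshtein_le_one (by simp [hl]) h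
      refine ⟨0, by simp, fun e => ?_⟩
      rw [List.set_cons_zero, hm]
      have := levenshtein_insert_le_one u w c
      exact (levenshtein_cons_left_le _ _ _).trans (by omega)
    -- `y` is inserted, and later the letter `c` of `x :: xs` is deleted
    · rw [levenshtein_comm] at h
      obtain ⟨u, c, w, rfl, hl'⟩ := exists_eq_insert_of_levenshtein_le_one (by simp [hl]) h
      refine ⟨u.length, by simp [hl'], fun e => ?_⟩
      rw [hl', show (u ++ c :: w).set u.length e = u ++ e :: w by simp, levenshtein_comm]
      have := levenshtein_insert_le_one u w e
      exact (levenshtein_cons_left_le _ _ _).trans (by omega)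
    · by_cases hxy : x = y
      · subst hxy
        rcases xs with _ | ⟨x', xs⟩
        · obtain rfl : ys = [] := List.eq_nil_of_length_eq_zero hl.symm
          refine ⟨0, by simp, fun e => ?_⟩
          rw [levenshtein_comm]
          exact (levenshtein_set_le_one [x] 0 e).trans one_le_two
        · obtain ⟨p, hp, hset⟩ :=
            exists_forall_levenshtein_set_le_two hl (by simpa using h) (List.cons_ne_nil _ _)
          refine ⟨p + 1, by simpa using hp, fun e => ?_⟩
          exact (levenshtein_cons_cons_le x x _ _).trans (by simpa using hset e)
      · rw [if_neg hxy] at h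
        refine ⟨0, by simp, fun e => ?_⟩
        exact (levenshtein_cons_cons_le e y xs ys).trans (by split <;> omega)

end Levenshtein

theorem hammingDist_le_one_iff {ι : Type*} {β : ι → Type*} [Fintype ι]
    [∀ i, DecidableEq (β i)] {x y : ∀ i, β i} :
    hammingDist x y ≤ 1 ↔ ∀ i j, x i ≠ y i → x j ≠ y j → i = j := by
  simp only [hammingDist, Finset.card_le_one, Finset.mem_filter, Finset.mem_univ, true_and]
  exact ⟨fun h i j hi hj => h i hi j hj, fun h i hi j hj => h i j hi hj⟩

theorem eq_update_of_hammingDist_le_one {ι β : Type*} [Fintype ι] [DecidableEq ι]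
    [DecidableEq β]
    {s v : ι → β} {i : ι} {c : β} (hc : c ≠ s i) (hs : hammingDist s v ≤ 1)
    (hs' : hammingDist (Function.update s i c) v ≤ 1) : v = Function.update s i (v i) := by
  rw [hammingDist_le_one_iff] at hs hs'
  funext q
  rcases eq_or_ne q i with rfl | hq
  · simp
  rw [Function.update_of_ne hq]
  by_contra hvq
  have hsi : s i = v i := by
    by_contra hsi
    exact hq (hs q i (Ne.symm hvq) hsi)
  exact hq (hs' q i (by simpa [Function.update_of_ne hq] using Ne.symm hvq)
    (by simpa [hsi] using hc))

theorem List.ofFn_update {α : Type*} {n : ℕ} (s : Fin n → α) (i : Fin n) (c : α) :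
    List.ofFn (Function.update s i c) = (List.ofFn s).set i c := by
  apply List.ext_getElem (by simp)
  intro j _ _
  simp [List.getElem_set, Function.update_apply, Fin.ext_iff, eq_comm]

section EditDist

variable {α : Type*} [DecidableEq α] {n : ℕ}

theorem editDist_self (s : Fin n → α) : editDist s s = 0 :=
  levenshtein_self _

theorem editDist_comm (s t : Fin n → α) : editDist s t = editDist t s :=
  levenshtein_comm _ _

theorem editDist_update_le_one (s : Fin n → α) (i : Fin n) (c : α) :
    editDist s (Function.update s i c) ≤ 1 := by
  rw [editDist, List.ofFn_update]
  exact levenshtein_set_le_one _ _ _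

theorem hammingDist_le_one_of_editDist_le_one {s t : Fin n → α} (h : editDist s t ≤ 1) :
    hammingDist s t ≤ 1 := by
  rcases eq_or_eq_set_of_levenshtein_le_one (by simp) h with h | ⟨p, b, h⟩
  · simp [List.ofFn_injective h]
  rw [hammingDist_le_one_iff]
  have hdiff : ∀ i, s i ≠ t i → (i : ℕ) = p := by
    intro i hi
    have hti := List.getElem_of_eq h (i := i) (by simp)
    simp only [List.getElem_ofFn, List.getElem_set] at hti
    by_contra hip
    exact hi (by rw [hti, if_neg (Ne.symm hip)])
  exact fun i j hi hj => Fin.ext ((hdiff i hi).trans (hdiff j hj).symm)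

theorem exists_forall_editDist_update_le_two {s t : Fin n → α} (h : editDist s t ≤ 2)
    (hn : 0 < n) : ∃ i, ∀ c, editDist (Function.update s i c) t ≤ 2 := by
  obtain ⟨p, hp, hset⟩ :=
    exists_forall_levenshtein_set_le_two (by simp) h (by simpa using hn.ne')
  refine ⟨⟨p, by simpa using hp⟩, fun c => ?_⟩
  rw [editDist, List.ofFn_update]
  exact hset c

end EditDist

theorem stmt13 {α : Type*} [Fintype α] [DecidableEq α] (hα : 1 < Fintype.card α)
    {n : ℕ} (B : Set (Fin n → α)) (hB : IsGuaranteed 1 1 B) :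
    IsGuaranteed 2 2 B := by
  intro s t hst
  rcases n.eq_zero_or_pos with rfl | hn
  · obtain ⟨v, hvB, hsv, -⟩ := hB s s (by simp [editDist_self])
    obtain rfl : t = s := Subsingleton.elim _ _
    exact ⟨v, hvB, by omega, by omega⟩
  obtain ⟨i, hi⟩ := exists_forall_editDist_update_le_two hst hn
  obtain ⟨c, hc⟩ := Fintype.exists_ne_of_one_lt_card hα (s i)
  obtain ⟨v, hvB, hsv, hs'v⟩ := hB s (Function.update s i c) (editDist_update_le_one s i c)
  have hv : v = Function.update s i (v i) :=
    eq_update_of_hammingDist_le_one hc (hammingDist_le_one_of_editDist_le_one hsv)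
      (hammingDist_le_one_of_editDist_le_one hs'v)
  refine ⟨v, hvB, by omega, ?_⟩
  rw [editDist_comm, hv]
  exact hi (v i)
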